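/- The formal power series F(x,y) = Σ_{n≥1} H_n(x) yⁿ with coefficients H_n(x) = 1/((1−xⁿ)(1−x^{n+1})) ∈ ℂ(x), regarded as a power series in y with coefficients in ℂ(x), is not D-finite in y: there do not exist k ≥ 0 and polynomials P_0, …, P_k in x and y with complex coefficients, not all zero, such that Σ_{i=0}^{k} P_i · ∂^i F/∂y^i = 0 in ℂ(x)[[y]]. -/

import Mathlib

open scoped Classical

/-- Interpret a polynomial `P(x,y) ∈ ℂ[x][y]` as a power series in `y`
with coefficients in `ℂ(x)`. -/
noncomputable def toSeries (P : Polynomial (Polynomial ℂ)) : PowerSeries (RatFunc ℂ) :=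
  ((P.map (algebraMap (Polynomial ℂ) (RatFunc ℂ)) : Polynomial (RatFunc ℂ)) :
    PowerSeries (RatFunc ℂ))

/-- A power series in `y` with coefficients in `ℂ(x)` is D-finite (in `y`) if it satisfies a
nontrivial linear differential equation `Σ_{i=0}^k P_i(x,y) ∂^i f/∂y^i = 0` whose
coefficients are polynomials in `x` and `y`. -/
def IsDFiniteY (f : PowerSeries (RatFunc ℂ)) : Prop :=
  ∃ (k : ℕ) (P : ℕ → Polynomial (Polynomial ℂ)),
    (∃ i, i ≤ k ∧ P i ≠ 0) ∧
    ∑ i ∈ Finset.range (k + 1),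
      toSeries (P i) * ((fun g => PowerSeries.derivative (RatFunc ℂ) g)^[i] f) = 0

/-- `F(x,y) = Σ_{n≥1} yⁿ/((1−xⁿ)(1−x^{n+1}))`, as a power series in `y` with
coefficients in `ℂ(x)`. -/
noncomputable def Fcounter : PowerSeries (RatFunc ℂ) :=
  PowerSeries.mk fun n =>
    if n = 0 then 0
    else 1 / ((1 - RatFunc.X ^ n) * (1 - RatFunc.X ^ (n + 1)))

/-!
Suppose `Σᵢ Pᵢ(x, y) ∂ⁱF/∂yⁱ = 0` with some `Pᵢ ≠ 0`, and write `Pᵢ = Σⱼ pᵢⱼ(x) yʲ`. Pick the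
nonzero `pᵢ₀ⱼ₀` maximising `i - j`, and then `i`. The coefficient of `yᵐ` is
`Σ pᵢⱼ (m-j+i)(m-j+i-1)⋯(m-j+1) Hₘ₋ⱼ₊ᵢ = 0`. Let `α` be a primitive `n`-th root of unity with
`n` large and `N` a multiple of `n`. Among the indices occurring in the coefficient of `yᵐ`,
`m = N - 1 - (i₀ - j₀)`, only `H_{N-1}` has a pole at `α`, and it is reached exactly on the
diagonal `i - j = i₀ - j₀`. Clearing denominators and evaluating at `α` gives
`Σ_{diagonal} pᵢⱼ(α) (N-1)(N-2)⋯(N-i) = 0` for infinitely many `N`: a polynomial identity in `N`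
whose leading coefficient is `pᵢ₀ⱼ₀(α)`. So `pᵢ₀ⱼ₀` vanishes at infinitely many roots of unity.
-/

open Polynomial Finset

theorem sum_eval_eq_zero_of_sum_div_eq_zero {K ι β : Type*} [Field K] [DecidableEq β]
    {s : Finset ι} {a : ι → K[X]} {ν : ι → β}
    {q : β → K[X]} {α : K} {b : β} (hq : ∀ u ∈ s, q (ν u) ≠ 0)
    (hsum : ∑ u ∈ s, algebraMap K[X] (RatFunc K) (a u) / algebraMap K[X] (RatFunc K) (q (ν u)) = 0)
    (hroot : ∀ u ∈ s, (q (ν u)).eval α = 0 ↔ ν u = b) :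
    ∑ u ∈ s with ν u = b, (a u).eval α = 0 := by
  set T := s.image ν
  have hcleared : ∑ u ∈ s, a u * ∏ c ∈ T.erase (ν u), q c = 0 := by
    apply RatFunc.algebraMap_injective K
    rw [map_sum, map_zero, ← zero_mul (algebraMap K[X] (RatFunc K) (∏ c ∈ T, q c)), ← hsum,
      sum_mul]
    refine sum_congr rfl fun u hu => ?_
    rw [← mul_prod_erase T q (mem_image_of_mem ν hu), map_mul, map_mul]
    field_simp [(map_ne_zero_iff _ (RatFunc.algebraMap_injective K)).2 (hq u hu)]
  by_cases hb : b ∈ T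
  swap
  · refine sum_eq_zero fun u hu => absurd ?_ hb
    exact (mem_filter.1 hu).2 ▸ mem_image_of_mem ν (mem_filter.1 hu).1
  obtain ⟨u₀, hu₀, rfl⟩ := mem_image.1 hb
  have hpole : (q (ν u₀)).eval α = 0 := (hroot u₀ hu₀).2 rfl
  have hrest : (∏ c ∈ T.erase (ν u₀), q c).eval α ≠ 0 := by
    rw [eval_prod, prod_ne_zero_iff]
    intro c hc
    obtain ⟨hne, hcT⟩ := mem_erase.1 hc
    obtain ⟨u, hu, rfl⟩ := mem_image.1 hcT
    exact fun h => hne ((hroot u hu).1 h)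
  have hsplit : (∑ u ∈ s, a u * ∏ c ∈ T.erase (ν u), q c).eval α
      = (∑ u ∈ s with ν u = ν u₀, (a u).eval α) * (∏ c ∈ T.erase (ν u₀), q c).eval α := by
    rw [eval_finsetSum, ← sum_filter_add_sum_filter_not s (fun u => ν u = ν u₀), sum_mul]
    refine (add_eq_left.2 (sum_eq_zero fun u hu => ?_)).trans (sum_congr rfl fun u hu => ?_)
    · rw [eval_mul, eval_prod, prod_eq_zero (mem_erase.2 ⟨Ne.symm (mem_filter.1 hu).2, hb⟩) hpole,
        mul_zero]
    · rw [eval_mul, (mem_filter.1 hu).2]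
  rw [hcleared, eval_zero] at hsplit
  exact (mul_eq_zero.1 hsplit.symm).resolve_right hrest

theorem coeff_sum_C_mul_descPochhammer {R ι : Type*} [CommRing R] [IsDomain R] {s : Finset ι}
    {a : ι → R} {deg : ι → ℕ} {u₀ : ι} (hu₀ : u₀ ∈ s) (hdeg : ∀ u ∈ s, u ≠ u₀ → deg u < deg u₀) :
    (∑ u ∈ s, C (a u) * descPochhammer R (deg u)).coeff (deg u₀) = a u₀ := by
  rw [finsetSum_coeff, sum_eq_single_of_mem u₀ hu₀ fun u hu hne => ?_]
  · have hlead := (monic_descPochhammer R (deg u₀)).coeff_natDegree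
    rw [descPochhammer_natDegree] at hlead
    rw [coeff_C_mul, hlead, mul_one]
  · refine coeff_eq_zero_of_natDegree_lt (natDegree_C_mul_le _ _ |>.trans_lt ?_)
    rw [descPochhammer_natDegree]
    exact hdeg u hu hne

theorem Nat.dvd_or_dvd_succ_iff {n t ν : ℕ} (hlo : n * t < ν + n) (hhi : ν < n * t) :
    n ∣ ν ∨ n ∣ ν + 1 ↔ ν + 1 = n * t := by
  refine ⟨fun h => ?_, fun h => Or.inr ⟨t, h⟩⟩
  rcases h with ⟨c, rfl⟩ | ⟨c, hc⟩
  · have h1 : c < t := Nat.lt_of_mul_lt_mul_left hhi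
    have h2 : t < c + 1 := Nat.lt_of_mul_lt_mul_left (a := n) (by rw [mul_add_one]; omega)
    omega
  · have h1 : c < t + 1 := Nat.lt_of_mul_lt_mul_left (a := n) (by rw [mul_add_one]; omega)
    have h2 : t < c + 1 := Nat.lt_of_mul_lt_mul_left (a := n) (by rw [mul_add_one]; omega)
    rw [hc, show c = t by omega]

theorem Complex.eq_zero_of_eval_primitiveRoot_eq_zero {q : ℂ[X]} {B : ℕ}
    (h : ∀ n, B < n → ∀ α : ℂ, IsPrimitiveRoot α n → q.eval α = 0) : q = 0 := by
  let ζ (t : ℕ) : ℂ := exp (2 * Real.pi * I / (t + B + 1 : ℕ))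
  have hζ (t : ℕ) : IsPrimitiveRoot (ζ t) (t + B + 1) := isPrimitiveRoot_exp _ (by omega)
  refine eq_zero_of_infinite_isRoot q <|
    Set.infinite_of_injective_forall_mem (f := ζ) (fun s t hst => ?_) fun t => h _ (by omega) _ (hζ t)
  have := (hζ s).unique (hst ▸ hζ t)
  omega

theorem exists_lex_max_sub_fst (S : Finset ((_ : ℕ) × ℕ)) (hS : S.Nonempty) :
    ∃ i₀ j₀ : ℕ, ⟨i₀, j₀⟩ ∈ S ∧ (∀ u ∈ S, u.1 + j₀ ≤ i₀ + u.2) ∧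
      ∀ u ∈ S, u.1 + j₀ = i₀ + u.2 → u.1 ≤ i₀ := by
  obtain ⟨⟨i₀, j₀⟩, hmem, hmax⟩ :=
    S.exists_max_image (fun u => toLex ((u.1 : ℤ) - u.2, u.1)) hS
  refine ⟨i₀, j₀, hmem, fun u hu => ?_, fun u hu hdiag => ?_⟩ <;>
    have := Prod.Lex.toLex_le_toLex.1 (hmax u hu) <;> dsimp only at this <;> omega

noncomputable def fcounterDenom (n : ℕ) : ℂ[X] := (1 - X ^ n) * (1 - X ^ (n + 1))

theorem fcounterDenom_ne_zero {n : ℕ} (hn : n ≠ 0) : fcounterDenom n ≠ 0 := fun h => by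
  simpa [fcounterDenom, hn] using congrArg (eval 0) h

theorem eval_fcounterDenom_eq_zero_iff {α : ℂ} {n : ℕ} (hα : IsPrimitiveRoot α n) (ν : ℕ) :
    (fcounterDenom ν).eval α = 0 ↔ n ∣ ν ∨ n ∣ ν + 1 := by
  simp [fcounterDenom, sub_eq_zero, eq_comm (a := (1 : ℂ)), hα.pow_eq_one_iff_dvd]

theorem coeff_Fcounter {n : ℕ} (hn : n ≠ 0) :
    PowerSeries.coeff n Fcounter = 1 / algebraMap ℂ[X] (RatFunc ℂ) (fcounterDenom n) := by
  simp [Fcounter, fcounterDenom, hn, RatFunc.algebraMap_X]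

theorem coeff_toSeries_mul (p : ℂ[X][X]) (g : PowerSeries (RatFunc ℂ)) {m : ℕ}
    (hm : ∀ j ∈ p.support, j ≤ m) :
    PowerSeries.coeff m (toSeries p * g)
      = ∑ j ∈ p.support, algebraMap ℂ[X] (RatFunc ℂ) (p.coeff j) * PowerSeries.coeff (m - j) g := by
  rw [PowerSeries.coeff_mul, Nat.sum_antidiagonal_eq_sum_range_succ_mk]
  symm
  refine sum_subset (fun j hj => mem_range.2 (Nat.lt_succ_of_le (hm j hj))) (fun j _ hj => ?_)
    |>.trans (sum_congr rfl fun j _ => ?_)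
  · rw [notMem_support_iff.1 hj, map_zero, zero_mul]
  · rw [toSeries, Polynomial.coeff_coe, coeff_map]

-- `⟨i, j⟩` indexes the term `pᵢⱼ(x) yʲ ∂ⁱ`: in `P i : ℂ[X][X]` the outer variable is `y`.
def coeffSupport {R : Type*} [Semiring R] (P : ℕ → R[X]) (k : ℕ) : Finset ((_ : ℕ) × ℕ) :=
  (range (k + 1)).sigma fun i => (P i).support

theorem mem_coeffSupport {R : Type*} [Semiring R] {P : ℕ → R[X]} {k : ℕ} {u : (_ : ℕ) × ℕ} :
    u ∈ coeffSupport P k ↔ u.1 ≤ k ∧ (P u.1).coeff u.2 ≠ 0 := by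
  simp [coeffSupport]

noncomputable def applyDiffOp (P : ℕ → ℂ[X][X]) (k : ℕ) (f : PowerSeries (RatFunc ℂ)) :
    PowerSeries (RatFunc ℂ) :=
  ∑ i ∈ range (k + 1), toSeries (P i) * (fun g => PowerSeries.derivative (RatFunc ℂ) g)^[i] f

theorem coeff_applyDiffOp (P : ℕ → ℂ[X][X]) (k : ℕ) (f : PowerSeries (RatFunc ℂ)) {m : ℕ}
    (hm : ∀ u ∈ coeffSupport P k, u.2 ≤ m) :
    PowerSeries.coeff m (applyDiffOp P k f)
      = ∑ u ∈ coeffSupport P k, algebraMap ℂ[X] (RatFunc ℂ) ((P u.1).coeff u.2)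
          * ((m - u.2 + u.1).descFactorial u.1 : RatFunc ℂ)
          * PowerSeries.coeff (m - u.2 + u.1) f := by
  rw [applyDiffOp, map_sum, coeffSupport, sum_sigma]
  refine sum_congr rfl fun i hi => ?_
  rw [coeff_toSeries_mul _ _ fun j hj => hm ⟨i, j⟩ (mem_sigma.2 ⟨hi, hj⟩)]
  refine sum_congr rfl fun j _ => ?_
  rw [mul_assoc, Nat.add_descFactorial_eq_ascFactorial]
  exact congrArg _ (PowerSeries.coeff_iterate_derivative f i (m - j))

section DFiniteEquation

variable {k : ℕ} {P : ℕ → ℂ[X][X]}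
  (heq : applyDiffOp P k Fcounter = 0)
  {D i₀ j₀ : ℕ} (hD : ∀ u ∈ coeffSupport P k, u.2 ≤ D)
  (hslope : ∀ u ∈ coeffSupport P k, u.1 + j₀ ≤ i₀ + u.2)
include heq hD hslope

theorem sum_diagonal_eval_mul_descFactorial_eq_zero (hi₀ : i₀ ≤ k) {n t : ℕ} (hn : k + D + 1 < n)
    (ht : 2 ≤ t) {α : ℂ} (hα : IsPrimitiveRoot α n) :
    ∑ u ∈ coeffSupport P k with u.1 + j₀ = i₀ + u.2,
      ((P u.1).coeff u.2).eval α * ((n * t - 1).descFactorial u.1 : ℂ) = 0 := by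
  set m := n * t - 1 + j₀ - i₀
  set ν : (_ : ℕ) × ℕ → ℕ := fun u => m - u.2 + u.1
  have hnt : n * 2 ≤ n * t := Nat.mul_le_mul_left n ht
  have hmD : ∀ u ∈ coeffSupport P k, u.2 ≤ m := fun u hu => by have := hD u hu; omega
  have hν : ∀ u ∈ coeffSupport P k, ν u ≠ 0 ∧ n * t < ν u + n ∧ ν u < n * t ∧
      (ν u = n * t - 1 ↔ u.1 + j₀ = i₀ + u.2) := fun u hu => by
    have := hD u hu; have := hslope u hu; have := (mem_coeffSupport.1 hu).1
    simp only [ν]; omega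
  have hcoeff := congrArg (PowerSeries.coeff m) heq
  rw [coeff_applyDiffOp P k _ hmD, map_zero] at hcoeff
  have hdiag := sum_eval_eq_zero_of_sum_div_eq_zero (q := fcounterDenom) (b := n * t - 1) (α := α)
    (a := fun u => (P u.1).coeff u.2 * ((ν u).descFactorial u.1 : ℂ[X]))
    (fun u hu => fcounterDenom_ne_zero (hν u hu).1)
    (hcoeff ▸ sum_congr rfl fun u hu => by
      rw [map_mul, map_natCast, div_eq_mul_one_div, ← coeff_Fcounter (hν u hu).1])
    (fun u hu => by
      rw [eval_fcounterDenom_eq_zero_iff hα, Nat.dvd_or_dvd_succ_iff (hν u hu).2.1 (hν u hu).2.2.1]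
      omega)
  rw [← hdiag, filter_congr fun u hu => (hν u hu).2.2.2.symm]
  refine sum_congr rfl fun u hu => ?_
  rw [eval_mul, eval_natCast, (mem_filter.1 hu).2]

theorem eval_corner_eq_zero (hmem : ⟨i₀, j₀⟩ ∈ coeffSupport P k)
    (htop : ∀ u ∈ coeffSupport P k, u.1 + j₀ = i₀ + u.2 → u.1 ≤ i₀) {n : ℕ} (hn : k + D + 1 < n)
    {α : ℂ} (hα : IsPrimitiveRoot α n) :
    ((P i₀).coeff j₀).eval α = 0 := by
  set G := ∑ u ∈ coeffSupport P k with u.1 + j₀ = i₀ + u.2,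
    C (((P u.1).coeff u.2).eval α) * descPochhammer ℂ u.1
  have hi₀ := (mem_coeffSupport.1 hmem).1
  have hG : G = 0 := by
    refine eq_zero_of_infinite_isRoot G <| Set.infinite_of_injective_forall_mem
      (f := fun t : ℕ => ((n * (t + 2) - 1 : ℕ) : ℂ)) (fun s t hst => ?_) fun t => ?_
    · have hn0 : 0 < n := by omega
      have := Nat.eq_of_mul_eq_mul_left hn0 <| Nat.sub_one_cancel (Nat.mul_pos hn0 (by omega))
        (Nat.mul_pos hn0 (by omega)) (Nat.cast_injective hst)
      omega
    · simp only [Set.mem_ofPred_eq, IsRoot, G, eval_finsetSum, eval_mul, eval_C,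
        descPochhammer_eval_eq_descFactorial]
      exact sum_diagonal_eval_mul_descFactorial_eq_zero heq hD hslope hi₀ hn (by omega) hα
  have hcorner : G.coeff i₀ = ((P i₀).coeff j₀).eval α :=
    coeff_sum_C_mul_descPochhammer (deg := fun u => u.1)
      (s := {u ∈ coeffSupport P k | u.1 + j₀ = i₀ + u.2}) (mem_filter.2 ⟨hmem, rfl⟩)
      fun u hu hne => by
      obtain ⟨hu, hdiag⟩ := mem_filter.1 hu
      refine lt_of_le_of_ne (htop u hu hdiag) fun h => hne ?_
      obtain ⟨i, j⟩ := u
      dsimp only at h hdiag ⊢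
      rw [h, show j = j₀ by omega]
  rwa [hG, coeff_zero, eq_comm] at hcorner

end DFiniteEquation

/-- `F(x,y) = Σ_{n≥1} yⁿ/((1−xⁿ)(1−x^{n+1}))` is not D-finite as a power series in `y`. -/
theorem Fcounter_not_dfinite : ¬ IsDFiniteY Fcounter := by
  rintro ⟨k, P, ⟨i, hik, hPi⟩, heq⟩
  set S := coeffSupport P k
  have hS : S.Nonempty := by
    obtain ⟨j, hj⟩ := nonempty_support_iff.2 hPi
    exact ⟨⟨i, j⟩, mem_coeffSupport.2 ⟨hik, mem_support_iff.1 hj⟩⟩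
  obtain ⟨i₀, j₀, hmem, hslope, htop⟩ := exists_lex_max_sub_fst S hS
  have hD : ∀ u ∈ S, u.2 ≤ S.sup (·.2) := fun u hu => le_sup (f := (·.2)) hu
  refine (mem_coeffSupport.1 hmem).2 <| Complex.eq_zero_of_eval_primitiveRoot_eq_zero
    fun n hn α hα => eval_corner_eq_zero heq hD hslope hmem htop hn hα
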